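/- The axiom scheme A3 is valid in all Nelsonian conditional models: for all formulas φ, ψ, χ, the formula ((φ ◇→ ψ) → (φ □→ χ)) → (φ □→ (ψ → χ)) is verified at every world of every Nelsonian conditional model, where φ ◇→ ψ abbreviates ~(φ □→ ~ψ). -/

import Mathlib

inductive CForm : Type where
  | var : Nat → CForm
  | and : CForm → CForm → CForm
  | or  : CForm → CForm → CForm
  | neg : CForm → CForm
  | imp : CForm → CForm → CForm
  | cond : CForm → CForm → CForm

/-- A Nelsonian conditional model: a Nelsonian model together with a
bi-set-indexed accessibility relation satisfying (c1) and (c2). -/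
structure CNModel where
  W : Type
  le : W → W → Prop
  refl : ∀ w, le w w
  trans : ∀ {a b c}, le a b → le b c → le a c
  Vp : Nat → W → Prop
  Vn : Nat → W → Prop
  monoP : ∀ (n : Nat) {w v}, le w v → Vp n w → Vp n v
  monoN : ∀ (n : Nat) {w v}, le w v → Vn n w → Vn n v
  R : W → Set W × Set W → W → Prop
  c1 : ∀ (XY : Set W × Set W) {w w' v}, le w w' → R w XY v → ∃ v', R w' XY v' ∧ le v v'
  c2 : ∀ (XY : Set W × Set W) {w v v'}, R w XY v → le v v' → ∃ w', le w w' ∧ R w' XY v'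

/-- Verification (`true`) and falsification (`false`) in a Nelsonian conditional model. -/
def CNModel.sat (M : CNModel) : CForm → Bool → M.W → Prop
  | .var n, true, w => M.Vp n w
  | .var n, false, w => M.Vn n w
  | .and φ ψ, true, w => M.sat φ true w ∧ M.sat ψ true w
  | .and φ ψ, false, w => M.sat φ false w ∨ M.sat ψ false w
  | .or φ ψ, true, w => M.sat φ true w ∨ M.sat ψ true w
  | .or φ ψ, false, w => M.sat φ false w ∧ M.sat ψ false w
  | .neg φ, b, w => M.sat φ (!b) w
  | .imp φ ψ, true, w => ∀ v, M.le w v → M.sat φ true v → M.sat ψ true v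
  | .imp φ ψ, false, w => M.sat φ true w ∧ M.sat ψ false w
  | .cond φ ψ, true, w =>
      ∀ v u, M.le w v → M.R v ({x | M.sat φ true x}, {x | M.sat φ false x}) u →
        M.sat ψ true u
  | .cond φ ψ, false, w =>
      ∃ u, M.R w ({x | M.sat φ true x}, {x | M.sat φ false x}) u ∧ M.sat ψ false u

/-- N4CK-validity: verified at every world of every Nelsonian conditional model. -/
def CValid (φ : CForm) : Prop := ∀ (M : CNModel) (w : M.W), M.sat φ true w

/-- The might-conditional φ ◇→ ψ := ~(φ □→ ~ψ). -/
def dcond (φ ψ : CForm) : CForm := .neg (.cond φ (.neg ψ))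

/-!
To verify `ψ → χ` at a world `t` above an `R_{‖φ‖}`-successor `u` of `v ≥ w`, condition (c2)
lifts the step `R v u`, `u ≤ t` to a step `R v' t` from some `v' ≥ v`. Then `t` witnesses
`φ ◇→ ψ` at `v'`, so the hypothesis gives `φ □→ χ` at `v'`, and hence `χ` at `t`.
-/

namespace CNModel

variable (M : CNModel)

/-- The pair `‖φ‖` of the verification set and the falsification set of `φ`. -/
def extension (φ : CForm) : Set M.W × Set M.W :=
  ({x | M.sat φ true x}, {x | M.sat φ false x})

variable {M}

theorem sat_dcond_true_iff {φ ψ : CForm} {w : M.W} :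
    M.sat (dcond φ ψ) true w ↔ ∃ u, M.R w (M.extension φ) u ∧ M.sat ψ true u :=
  Iff.rfl

theorem sat_of_sat_cond_of_R {φ χ : CForm} {w u : M.W} (h : M.sat (.cond φ χ) true w)
    (hR : M.R w (M.extension φ) u) : M.sat χ true u :=
  h w u (M.refl w) hR

theorem exists_le_sat_dcond_of_R_of_le {φ ψ : CForm} {v u t : M.W}
    (hR : M.R v (M.extension φ) u) (hut : M.le u t) (ht : M.sat ψ true t) :
    ∃ v', M.le v v' ∧ M.R v' (M.extension φ) t ∧ M.sat (dcond φ ψ) true v' := by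
  obtain ⟨v', hvv', hR'⟩ := M.c2 _ hR hut
  exact ⟨v', hvv', hR', sat_dcond_true_iff.mpr ⟨t, hR', ht⟩⟩

end CNModel

theorem a3_valid (φ ψ χ : CForm) :
    CValid (.imp (.imp (dcond φ ψ) (.cond φ χ)) (.cond φ (.imp ψ χ))) := by
  intro M w v _ h v₁ u hvv₁ hR t hut hψ
  obtain ⟨v₂, hv₁v₂, hR', hdcond⟩ := CNModel.exists_le_sat_dcond_of_R_of_le hR hut hψ
  exact CNModel.sat_of_sat_cond_of_R (h v₂ (M.trans hvv₁ hv₁v₂) hdcond) hR'
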